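/- Let 1 < p < 2, p' = p/(p-1), K = (p-1)^{-p}, and let φ be the implicit function with φ(s)(1+φ(s))^{p-2} = p^{p-2}s. Define L(s) = (p-1)/p · sφ(s) + (2-p)/(p(p-1)) s + s/(p(p-1)φ(s)) − (p-1)/p · s^{p/(p-1)} for s > 0. Then L(s) ≤ 1/(p(p-1)^p) for all s > 0, with equality at s = (p-1)^{1-p}. -/

import Mathlib

noncomputable def L (p : ℝ) (φ : ℝ → ℝ) (s : ℝ) : ℝ :=
  (p - 1) / p * (s * φ s) + (2 - p) / (p * (p - 1)) * s
    + s / (p * (p - 1) * φ s) - (p - 1) / p * s ^ (p / (p - 1))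

/-!
Substitute `t = φ s`: then `s = p^(2-p) t (1+t)^(p-2)`, a strictly increasing function of `t`,
and `L` becomes a function of `t` with derivative `s'(t) (t - s^(1/(p-1)))`. Since
`s = t^(p-1) (p t / (1+t))^(2-p)` and `2 - p > 0`, the factor `t - s^(1/(p-1))` has the sign of
`1 - (p-1) t`, so the maximum is attained at `t = 1/(p-1)`, that is at `s = (p-1)^(1-p)`.
-/

open Real Set

noncomputable def phiInv (p t : ℝ) : ℝ := p ^ (2 - p) * t * (1 + t) ^ (p - 2)

noncomputable def phiInvDeriv (p t : ℝ) : ℝ := p ^ (2 - p) * (1 + t) ^ (p - 3) * (1 + (p - 1) * t)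

-- `L p φ s` reads `φ` only at `s`, so along `s = phiInv p t` the constant function `t` stands in
-- for `φ`.
noncomputable def LReparam (p t : ℝ) : ℝ := L p (fun _ => t) (phiInv p t)

section

variable {p t : ℝ}

lemma phiInv_eq_of_eq {s : ℝ} (hp : 0 < p) (h : t * (1 + t) ^ (p - 2) = p ^ (p - 2) * s) :
    phiInv p t = s := by
  rw [phiInv, mul_assoc, h, ← mul_assoc, ← rpow_add hp, sub_add_sub_cancel', sub_self, rpow_zero,
    one_mul]

lemma L_eq_LReparam {φ : ℝ → ℝ} {s : ℝ} (hp : 0 < p)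
    (hφs : φ s * (1 + φ s) ^ (p - 2) = p ^ (p - 2) * s) : L p φ s = LReparam p (φ s) := by
  rw [LReparam, phiInv_eq_of_eq hp hφs]
  rfl

lemma phiInv_pos (hp : 0 < p) (ht : 0 < t) : 0 < phiInv p t := by
  have : 0 < 1 + t := by linarith
  unfold phiInv
  positivity

lemma phiInv_eq_rpow_mul (hp : 0 < p) (ht : 0 < t) :
    phiInv p t = t ^ (p - 1) * (p * t / (1 + t)) ^ (2 - p) := by
  have h1 : 0 < 1 + t := by linarith
  rw [div_rpow (by positivity) h1.le, mul_rpow hp.le ht.le, phiInv,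
    show (1 + t) ^ (p - 2) = ((1 + t) ^ (2 - p))⁻¹ by rw [← rpow_neg h1.le, neg_sub]]
  have : t ^ (p - 1) * t ^ (2 - p) = t := by
    rw [← rpow_add ht, show p - 1 + (2 - p) = 1 by ring, rpow_one]
  linear_combination (-(p ^ (2 - p) * ((1 + t) ^ (2 - p))⁻¹)) * this

lemma hasDerivAt_phiInv (ht : 0 < 1 + t) : HasDerivAt (phiInv p) (phiInvDeriv p t) t := by
  have hpow : HasDerivAt (fun x => (1 + x) ^ (p - 2)) (1 * (p - 2) * (1 + t) ^ (p - 2 - 1)) t :=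
    ((hasDerivAt_id t).const_add 1).rpow_const (Or.inl ht.ne')
  refine (((hasDerivAt_id' t).const_mul (p ^ (2 - p))).fun_mul hpow).congr_deriv ?_
  rw [phiInvDeriv, show p - 2 - 1 = p - 3 by ring, show p - 2 = (p - 3) + 1 by ring,
    rpow_add ht, rpow_one]
  ring

lemma phiInvDeriv_pos (hp : 1 < p) (ht : 0 < t) : 0 < phiInvDeriv p t := by
  have h1 : 0 < 1 + t := by linarith
  have h2 : 0 < 1 + (p - 1) * t := by nlinarith
  have : 0 < p := by linarith
  unfold phiInvDeriv
  positivity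

lemma phiInv_strictMonoOn (hp : 1 < p) : StrictMonoOn (phiInv p) (Ioi 0) :=
  strictMonoOn_of_hasDerivWithinAt_pos (convex_Ioi 0)
    (fun x (hx : 0 < x) =>
      (hasDerivAt_phiInv (p := p) (by linarith)).continuousAt.continuousWithinAt)
    (fun x hx => by
      rw [interior_Ioi] at hx ⊢
      exact (hasDerivAt_phiInv (by linarith [mem_Ioi.mp hx])).hasDerivWithinAt)
    (fun x hx => phiInvDeriv_pos hp (by simpa using hx))

lemma phiInv_rpow_inv_le (hp1 : 1 < p) (hp2 : p ≤ 2) (ht : 0 < t) (h : t ≤ (p - 1)⁻¹) :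
    phiInv p t ^ (p - 1)⁻¹ ≤ t := by
  have hp0 : 0 < p := by linarith
  have h1 : 0 < 1 + t := by linarith
  have hpt : (p - 1) * t ≤ 1 := by
    simpa [mul_inv_cancel₀ (sub_pos.2 hp1).ne'] using
      mul_le_mul_of_nonneg_left h (sub_pos.2 hp1).le
  rw [rpow_inv_le_iff_of_pos (phiInv_pos hp0 ht).le ht.le (sub_pos.2 hp1),
    phiInv_eq_rpow_mul hp0 ht]
  refine mul_le_of_le_one_right (by positivity) (rpow_le_one (by positivity) ?_ (by linarith))
  rw [div_le_one h1]
  linarith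

lemma le_phiInv_rpow_inv (hp1 : 1 < p) (hp2 : p ≤ 2) (h : (p - 1)⁻¹ ≤ t) :
    t ≤ phiInv p t ^ (p - 1)⁻¹ := by
  have hp0 : 0 < p := by linarith
  have ht : 0 < t := (inv_pos.2 (sub_pos.2 hp1)).trans_le h
  have h1 : 0 < 1 + t := by linarith
  have hpt : 1 ≤ (p - 1) * t := by
    simpa [mul_inv_cancel₀ (sub_pos.2 hp1).ne'] using
      mul_le_mul_of_nonneg_left h (sub_pos.2 hp1).le
  rw [le_rpow_inv_iff_of_pos ht.le (phiInv_pos hp0 ht).le (sub_pos.2 hp1),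
    phiInv_eq_rpow_mul hp0 ht]
  refine le_mul_of_one_le_right (by positivity) (one_le_rpow ?_ (by linarith))
  rw [one_le_div h1]
  linarith

lemma phiInv_inv_sub_one (hp : 1 < p) : phiInv p (p - 1)⁻¹ = (p - 1) ^ (1 - p) := by
  have hpm : 0 < p - 1 := sub_pos.2 hp
  have hone : p * (p - 1)⁻¹ / (1 + (p - 1)⁻¹) = 1 := by
    field_simp
    ring
  rw [phiInv_eq_rpow_mul (by linarith) (inv_pos.2 hpm), hone, one_rpow, mul_one,
    inv_rpow hpm.le, ← rpow_neg hpm.le, neg_sub]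

lemma LReparam_inv_sub_one (hp : 1 < p) : LReparam p (p - 1)⁻¹ = 1 / (p * (p - 1) ^ p) := by
  have hpm : 0 < p - 1 := sub_pos.2 hp
  have hs : (p - 1) ^ (1 - p) = (p - 1) / (p - 1) ^ p := by
    rw [rpow_sub hpm, rpow_one]
  have hsp : ((p - 1) ^ (1 - p)) ^ (p / (p - 1)) = ((p - 1) ^ p)⁻¹ := by
    rw [← rpow_mul hpm.le, show (1 - p) * (p / (p - 1)) = -p by field_simp; ring, rpow_neg hpm.le]
  rw [LReparam, L, phiInv_inv_sub_one hp, hsp, hs]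
  field_simp
  ring

lemma hasDerivAt_LReparam (hp : 1 < p) (ht : 0 < t) :
    HasDerivAt (LReparam p) (phiInvDeriv p t * (t - phiInv p t ^ (p - 1)⁻¹)) t := by
  have hp0 : 0 < p := by linarith
  have hpm : 0 < p - 1 := sub_pos.2 hp
  have h1 : 0 < 1 + t := by linarith
  have hd := hasDerivAt_phiInv (p := p) h1
  have hA := (hd.fun_mul (hasDerivAt_id' t)).const_mul ((p - 1) / p)
  have hB := hd.const_mul ((2 - p) / (p * (p - 1)))
  have hC := hd.fun_div ((hasDerivAt_id' t).const_mul (p * (p - 1))) (by positivity)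
  have hD := (hd.rpow_const (p := p / (p - 1)) (Or.inl (phiInv_pos hp0 ht).ne')).const_mul
    ((p - 1) / p)
  refine (((hA.add hB).add hC).sub hD).congr_deriv ?_
  rw [show p / (p - 1) - 1 = (p - 1)⁻¹ by field_simp; ring]
  have hh : phiInv p t = p ^ (2 - p) * (1 + t) ^ (p - 3) * (t * (1 + t)) := by
    rw [phiInv, show p - 2 = (p - 3) + 1 by ring, rpow_add h1, rpow_one]
    ring
  rw [hh, phiInvDeriv]
  field_simp
  ring

lemma isMaxOn_LReparam (hp1 : 1 < p) (hp2 : p ≤ 2) : IsMaxOn (LReparam p) (Ioi 0) (p - 1)⁻¹ := by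
  have ht0 : 0 < (p - 1)⁻¹ := inv_pos.2 (sub_pos.2 hp1)
  have hcont : ContinuousOn (LReparam p) (Ioi 0) := fun x hx =>
    (hasDerivAt_LReparam hp1 hx).continuousAt.continuousWithinAt
  set f' := fun x => phiInvDeriv p x * (x - phiInv p x ^ (p - 1)⁻¹)
  intro t (ht : 0 < t)
  rcases le_total t (p - 1)⁻¹ with h | h
  · refine monotoneOn_of_hasDerivWithinAt_nonneg (f' := f') (convex_Ioc 0 _)
      (hcont.mono Ioc_subset_Ioi_self) (fun x hx => ?_) (fun x hx => ?_) ⟨ht, h⟩ ⟨ht0, le_rfl⟩ h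
      <;> rw [interior_Ioc] at hx
    · exact (hasDerivAt_LReparam hp1 hx.1).hasDerivWithinAt
    · exact mul_nonneg (phiInvDeriv_pos hp1 hx.1).le
        (sub_nonneg.2 (phiInv_rpow_inv_le hp1 hp2 hx.1 hx.2.le))
  · refine antitoneOn_of_hasDerivWithinAt_nonpos (f' := f') (convex_Ici _)
      (hcont.mono fun x hx => ht0.trans_le hx) (fun x hx => ?_) (fun x hx => ?_)
      self_mem_Ici h h <;> rw [interior_Ici] at hx
    · exact (hasDerivAt_LReparam hp1 (ht0.trans hx)).hasDerivWithinAt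
    · exact mul_nonpos_of_nonneg_of_nonpos (phiInvDeriv_pos hp1 (ht0.trans hx)).le
        (sub_nonpos.2 (le_phiInv_rpow_inv hp1 hp2 hx.le))

end

theorem stmt_14 (p : ℝ) (hp1 : 1 < p) (hp2 : p < 2) (φ : ℝ → ℝ)
    (hφpos : ∀ s, 0 < s → 0 < φ s)
    (hφ : ∀ s, 0 < s → φ s * (1 + φ s) ^ (p - 2) = p ^ (p - 2) * s) :
    (∀ s, 0 < s → L p φ s ≤ 1 / (p * (p - 1) ^ p)) ∧
    L p φ ((p - 1) ^ (1 - p)) = 1 / (p * (p - 1) ^ p) := by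
  have hp0 : 0 < p := by linarith
  have hs0 : 0 < (p - 1) ^ (1 - p) := rpow_pos_of_pos (sub_pos.2 hp1) _
  refine ⟨fun s hs => ?_, ?_⟩
  · rw [L_eq_LReparam hp0 (hφ s hs), ← LReparam_inv_sub_one hp1]
    exact isMaxOn_LReparam hp1 hp2.le (hφpos s hs)
  · have hφs0 : φ ((p - 1) ^ (1 - p)) = (p - 1)⁻¹ :=
      (phiInv_strictMonoOn hp1).injOn (hφpos _ hs0) (inv_pos.2 (sub_pos.2 hp1))
        (by rw [phiInv_eq_of_eq hp0 (hφ _ hs0), phiInv_inv_sub_one hp1])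
    rw [L_eq_LReparam hp0 (hφ _ hs0), hφs0, LReparam_inv_sub_one hp1]
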